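/- Let ρ be a quantum state on registers A₁,…,A_m and σ a quantum state on registers B₁,…,B_m (each A_i and B_i of equal dimension). Performing the SWAP test between A_i and B_i for each i ∈ [m] and accepting iff all tests succeed, the acceptance probability equals 2^{-m} Σ_{S⊆[m]} Tr(ρ_S σ_S), where ρ_S (resp. σ_S) is the reduced state of ρ (resp. σ) on the registers indexed by S. -/

import Mathlib

open Matrix
open scoped ComplexOrder Kronecker
noncomputable section

/-- Square root of a matrix: the PSD square root if the matrix is PSD, else 0. -/
noncomputable def matSqrt {n : Type*} [Fintype n] [DecidableEq n]
    (A : Matrix n n ℂ) : Matrix n n ℂ :=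
  open scoped Classical in
  if h : A.PosSemidef then
    (h.1.eigenvectorUnitary.1 * diagonal ((↑) ∘ (√·) ∘ h.1.eigenvalues) *
      (star h.1.eigenvectorUnitary : Matrix n n ℂ))
  else 0

/-- Trace norm ‖A‖₁ = Tr √(AᴴA). -/
noncomputable def traceNorm {n : Type*} [Fintype n] [DecidableEq n]
    (A : Matrix n n ℂ) : ℝ :=
  (Matrix.trace (matSqrt (Aᴴ * A))).re

/-- Trace distance TD(ρ,σ) = (1/2)‖ρ−σ‖₁. -/
noncomputable def TD {n : Type*} [Fintype n] [DecidableEq n]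
    (ρ σ : Matrix n n ℂ) : ℝ :=
  traceNorm (ρ - σ) / 2

/-- Uhlmann fidelity F(ρ,σ) = (Tr √(√σ ρ √σ))². -/
noncomputable def fidelity {n : Type*} [Fintype n] [DecidableEq n]
    (ρ σ : Matrix n n ℂ) : ℝ :=
  ((Matrix.trace (matSqrt (matSqrt σ * ρ * matSqrt σ))).re) ^ 2

/-- ρ is a density matrix: positive semidefinite with unit trace. -/
def IsDensity {n : Type*} [Fintype n] [DecidableEq n]
    (ρ : Matrix n n ℂ) : Prop :=
  ρ.PosSemidef ∧ ρ.trace = 1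

variable {m d : ℕ}

/-- Merge an assignment on registers in `S` with one on registers outside `S`. -/
def mergeFn (S : Finset (Fin m)) (a : {i // i ∈ S} → Fin d)
    (c : {i // i ∉ S} → Fin d) : Fin m → Fin d :=
  fun i => if h : i ∈ S then a ⟨i, h⟩ else c ⟨i, h⟩

/-- Reduced state ρ_S: all registers outside `S` are traced out. -/
noncomputable def reduce (S : Finset (Fin m))
    (ρ : Matrix (Fin m → Fin d) (Fin m → Fin d) ℂ) :
    Matrix ({i // i ∈ S} → Fin d) ({i // i ∈ S} → Fin d) ℂ :=
  Matrix.of fun a b => ∑ c : {i // i ∉ S} → Fin d,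
    ρ (mergeFn S a c) (mergeFn S b c)

/-- The permutation of (A,B) register assignments that swaps A_i and B_i for
every i ∈ S. -/
def swapFn (S : Finset (Fin m))
    (p : (Fin m → Fin d) × (Fin m → Fin d)) :
    (Fin m → Fin d) × (Fin m → Fin d) :=
  (fun i => if i ∈ S then p.2 i else p.1 i,
   fun i => if i ∈ S then p.1 i else p.2 i)

/-- The unitary SWAP_S swapping registers A_i ↔ B_i for i ∈ S. -/
noncomputable def swapMat (S : Finset (Fin m)) :
    Matrix ((Fin m → Fin d) × (Fin m → Fin d))
           ((Fin m → Fin d) × (Fin m → Fin d)) ℂ :=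
  Matrix.of fun p q => if p = swapFn S q then 1 else 0

/-- The projector onto the all-accept outcome of m parallel SWAP tests between
A_i and B_i (i ∈ [m]); it equals ⊗_{i∈[m]} (I + SWAP_i)/2 = 2^{-m} Σ_S SWAP_S,
so the acceptance probability is its expectation in the tested state. -/
noncomputable def swapTestAcceptProj (m d : ℕ) :
    Matrix ((Fin m → Fin d) × (Fin m → Fin d))
           ((Fin m → Fin d) × (Fin m → Fin d)) ℂ :=
  ((2 : ℂ) ^ m)⁻¹ • ∑ S : Finset (Fin m), swapMat S

/-!
Write a register assignment of `A` (and of `B`) as its part on `S` together with its part off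
`S`. Then `SWAP_S` exchanges the `S`-parts of the two assignments and leaves the rest alone, so
`Tr(SWAP_S (ρ ⊗ σ)) = Σ ρ(x c, y c) σ(y c', x c')`, summed over `S`-parts `x, y` and outside
parts `c, c'`; summing out `c` and `c'` first gives `Σ_{x,y} ρ_S(x, y) σ_S(y, x) = Tr(ρ_S σ_S)`.
Averaging over `S` gives the acceptance probability.
-/

lemma sum_eq_sum_mergeFn {M : Type*} [AddCommMonoid M] (S : Finset (Fin m))
    (f : (Fin m → Fin d) → M) :
    ∑ a, f a = ∑ x : {i // i ∈ S} → Fin d, ∑ c : {i // i ∉ S} → Fin d, f (mergeFn S x c) := by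
  rw [← Fintype.sum_prod_type']
  exact ((Equiv.piEquivPiSubtypeProd (· ∈ S) fun _ => Fin d).symm.sum_comp f).symm

lemma swapFn_mergeFn (S : Finset (Fin m)) (x y : {i // i ∈ S} → Fin d)
    (c c' : {i // i ∉ S} → Fin d) :
    swapFn S (mergeFn S x c, mergeFn S y c') = (mergeFn S y c, mergeFn S x c') := by
  ext i <;> by_cases h : i ∈ S <;> simp [swapFn, mergeFn, h]

lemma trace_swapMat_mul (S : Finset (Fin m))
    (M : Matrix ((Fin m → Fin d) × (Fin m → Fin d)) ((Fin m → Fin d) × (Fin m → Fin d)) ℂ) :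
    (swapMat S * M).trace = ∑ q, M q (swapFn S q) := by
  simp only [trace, diag, mul_apply, swapMat, of_apply, ite_mul, one_mul, zero_mul]
  rw [Finset.sum_comm]
  simp

lemma trace_swapMat_mul_kronecker (S : Finset (Fin m))
    (ρ σ : Matrix (Fin m → Fin d) (Fin m → Fin d) ℂ) :
    (swapMat S * (ρ ⊗ₖ σ)).trace = (reduce S ρ * reduce S σ).trace := by
  rw [trace_swapMat_mul, Fintype.sum_prod_type]
  simp_rw [sum_eq_sum_mergeFn S, swapFn_mergeFn]
  simp only [kroneckerMap_apply, trace, diag, mul_apply, reduce, of_apply, Finset.sum_mul_sum]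
  exact Finset.sum_congr rfl fun x _ => Finset.sum_comm

theorem parallel_swapTest_accept_prob_general
    (m d : ℕ) (ρ σ : Matrix (Fin m → Fin d) (Fin m → Fin d) ℂ) :
    Matrix.trace (swapTestAcceptProj m d * (ρ ⊗ₖ σ)) =
      ((2 : ℂ) ^ m)⁻¹ *
        ∑ S : Finset (Fin m), Matrix.trace (reduce S ρ * reduce S σ) := by
  simp only [swapTestAcceptProj, smul_mul, trace_smul, Matrix.sum_mul, trace_sum, smul_eq_mul,
    trace_swapMat_mul_kronecker]

/-- Harrow–Montanaro: performing the SWAP test between A_i and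
B_i for each i ∈ [m] and accepting iff all tests succeed, the acceptance
probability on ρ ⊗ σ equals 2^{-m} Σ_{S⊆[m]} Tr(ρ_S σ_S). -/
theorem parallel_swapTest_accept_prob
    (m d : ℕ) (ρ σ : Matrix (Fin m → Fin d) (Fin m → Fin d) ℂ)
    (hρ : IsDensity ρ) (hσ : IsDensity σ) :
    Matrix.trace (swapTestAcceptProj m d * (ρ ⊗ₖ σ)) =
      ((2 : ℂ) ^ m)⁻¹ *
        ∑ S : Finset (Fin m), Matrix.trace (reduce S ρ * reduce S σ) :=
  parallel_swapTest_accept_prob_general m d ρ σ
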